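/- Suppose U ⊕ I_{X₀} = E (V ⊕ I_{Y₀}) F with E, F invertible. For any bounded operators X : X → X₀ and Y : Y → Y₀ set Ẽ = [[I,0],[X,I]] E [[I,0],[Y,I]] and F̃ = [[I,0],[-YV,I]] F [[I,0],[-XU,I]]. Then Ẽ and F̃ are invertible and U ⊕ I_{X₀} = Ẽ (V ⊕ I_{Y₀}) F̃. -/
import Mathlib


open ContinuousLinearMap

/-- 2×2 block operator matrix `[[A, B],[C, D]] : X ⊕ Y → X' ⊕ Y'`. -/
noncomputable def blk {X Y X' Y' : Type*} [NormedAddCommGroup X] [NormedSpace ℝ X]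
    [NormedAddCommGroup Y] [NormedSpace ℝ Y] [NormedAddCommGroup X'] [NormedSpace ℝ X']
    [NormedAddCommGroup Y'] [NormedSpace ℝ Y']
    (A : X →L[ℝ] X') (B : Y →L[ℝ] X') (C : X →L[ℝ] Y') (D : Y →L[ℝ] Y') :
    (X × Y) →L[ℝ] (X' × Y') :=
  (A.coprod B).prod (C.coprod D)

section blocks
variable {X Y X' Y' : Type*} [NormedAddCommGroup X] [NormedSpace ℝ X]
    [NormedAddCommGroup Y] [NormedSpace ℝ Y] [NormedAddCommGroup X'] [NormedSpace ℝ X']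
    [NormedAddCommGroup Y'] [NormedSpace ℝ Y']

/-- (1,1)-entry of a block operator. -/
noncomputable def b11 (T : (X × Y) →L[ℝ] (X' × Y')) : X →L[ℝ] X' :=
  (ContinuousLinearMap.fst ℝ X' Y').comp (T.comp (ContinuousLinearMap.inl ℝ X Y))

/-- (1,2)-entry of a block operator. -/
noncomputable def b12 (T : (X × Y) →L[ℝ] (X' × Y')) : Y →L[ℝ] X' :=
  (ContinuousLinearMap.fst ℝ X' Y').comp (T.comp (ContinuousLinearMap.inr ℝ X Y))

/-- (2,1)-entry of a block operator. -/
noncomputable def b21 (T : (X × Y) →L[ℝ] (X' × Y')) : X →L[ℝ] Y' :=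
  (ContinuousLinearMap.snd ℝ X' Y').comp (T.comp (ContinuousLinearMap.inl ℝ X Y))

/-- (2,2)-entry of a block operator. -/
noncomputable def b22 (T : (X × Y) →L[ℝ] (X' × Y')) : Y →L[ℝ] Y' :=
  (ContinuousLinearMap.snd ℝ X' Y').comp (T.comp (ContinuousLinearMap.inr ℝ X Y))

end blocks


lemma blk_apply {X Y X' Y' : Type*} [NormedAddCommGroup X] [NormedSpace ℝ X]
    [NormedAddCommGroup Y] [NormedSpace ℝ Y] [NormedAddCommGroup X'] [NormedSpace ℝ X']
    [NormedAddCommGroup Y'] [NormedSpace ℝ Y']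
    (A : X →L[ℝ] X') (B : Y →L[ℝ] X') (C : X →L[ℝ] Y') (D : Y →L[ℝ] Y') (p : X × Y) :
    blk A B C D p = (A p.1 + B p.2, C p.1 + D p.2) := rfl

/-- The lower-triangular transformation of `E` and `F` preserves equivalence after extension. -/
theorem stmt9 {X Y X₀ Y₀ : Type*} [NormedAddCommGroup X] [NormedSpace ℝ X] [CompleteSpace X]
    [NormedAddCommGroup Y] [NormedSpace ℝ Y] [CompleteSpace Y]
    [NormedAddCommGroup X₀] [NormedSpace ℝ X₀] [CompleteSpace X₀]
    [NormedAddCommGroup Y₀] [NormedSpace ℝ Y₀] [CompleteSpace Y₀]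
    (U : X →L[ℝ] X) (V : Y →L[ℝ] Y)
    (E : (Y × Y₀) →L[ℝ] (X × X₀)) (Einv : (X × X₀) →L[ℝ] (Y × Y₀))
    (F : (X × X₀) →L[ℝ] (Y × Y₀)) (Finv : (Y × Y₀) →L[ℝ] (X × X₀))
    (hE1 : E.comp Einv = ContinuousLinearMap.id ℝ (X × X₀))
    (hE2 : Einv.comp E = ContinuousLinearMap.id ℝ (Y × Y₀))
    (hF1 : F.comp Finv = ContinuousLinearMap.id ℝ (Y × Y₀))
    (hF2 : Finv.comp F = ContinuousLinearMap.id ℝ (X × X₀))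
    (hEq : blk U 0 0 (ContinuousLinearMap.id ℝ X₀) =
      E.comp ((blk V 0 0 (ContinuousLinearMap.id ℝ Y₀)).comp F))
    (G : X →L[ℝ] X₀) (H : Y →L[ℝ] Y₀)
    (Et : (Y × Y₀) →L[ℝ] (X × X₀))
    (hEt : Et = (blk (ContinuousLinearMap.id ℝ X) 0 G (ContinuousLinearMap.id ℝ X₀)).comp
      (E.comp (blk (ContinuousLinearMap.id ℝ Y) 0 H (ContinuousLinearMap.id ℝ Y₀))))
    (Ft : (X × X₀) →L[ℝ] (Y × Y₀))
    (hFt : Ft = (blk (ContinuousLinearMap.id ℝ Y) 0 (-(H.comp V)) (ContinuousLinearMap.id ℝ Y₀)).comp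
      (F.comp (blk (ContinuousLinearMap.id ℝ X) 0 (-(G.comp U)) (ContinuousLinearMap.id ℝ X₀)))) :
    (∃ Et' : (X × X₀) →L[ℝ] (Y × Y₀),
      Et.comp Et' = ContinuousLinearMap.id ℝ (X × X₀) ∧
      Et'.comp Et = ContinuousLinearMap.id ℝ (Y × Y₀)) ∧
    (∃ Ft' : (Y × Y₀) →L[ℝ] (X × X₀),
      Ft.comp Ft' = ContinuousLinearMap.id ℝ (Y × Y₀) ∧
      Ft'.comp Ft = ContinuousLinearMap.id ℝ (X × X₀)) ∧
    blk U 0 0 (ContinuousLinearMap.id ℝ X₀) =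
      Et.comp ((blk V 0 0 (ContinuousLinearMap.id ℝ Y₀)).comp Ft) := by
  have hE1' : ∀ q, E (Einv q) = q := fun q => DFunLike.congr_fun hE1 q
  have hE2' : ∀ q, Einv (E q) = q := fun q => DFunLike.congr_fun hE2 q
  have hF1' : ∀ q, F (Finv q) = q := fun q => DFunLike.congr_fun hF1 q
  have hF2' : ∀ q, Finv (F q) = q := fun q => DFunLike.congr_fun hF2 q
  have hEq' : ∀ p : X × X₀, (U p.1, p.2) = E (V (F p).1, (F p).2) := by
    intro p
    have := DFunLike.congr_fun hEq p
    simpa [blk_apply] using this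
  subst hEt hFt
  refine ⟨⟨(blk (ContinuousLinearMap.id ℝ Y) 0 (-H) (ContinuousLinearMap.id ℝ Y₀)).comp
      (Einv.comp (blk (ContinuousLinearMap.id ℝ X) 0 (-G) (ContinuousLinearMap.id ℝ X₀))), ?_, ?_⟩,
    ⟨(blk (ContinuousLinearMap.id ℝ X) 0 (G.comp U) (ContinuousLinearMap.id ℝ X₀)).comp
      (Finv.comp (blk (ContinuousLinearMap.id ℝ Y) 0 (H.comp V) (ContinuousLinearMap.id ℝ Y₀))), ?_, ?_⟩, ?_⟩
  · refine ContinuousLinearMap.ext fun p => ?_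
    simp [blk_apply, add_neg_cancel_left, hE1']
  · refine ContinuousLinearMap.ext fun p => ?_
    simp [blk_apply, neg_add_cancel_left, hE2']
  · refine ContinuousLinearMap.ext fun p => ?_
    simp [blk_apply, neg_add_cancel_left, hF1']
  · refine ContinuousLinearMap.ext fun p => ?_
    simp [blk_apply, add_neg_cancel_left, hF2']
  · refine ContinuousLinearMap.ext fun p => ?_
    simp only [blk_apply, comp_apply, zero_apply, coe_id', id_eq, add_zero, zero_add,
      ContinuousLinearMap.neg_apply, ContinuousLinearMap.comp_apply, ContinuousLinearMap.id_apply]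
    rw [add_neg_cancel_left]
    rw [← hEq' (p.1, -G (U p.1) + p.2)]
    simp [add_neg_cancel_left]
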